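/- For every rooted forest M, the subspace H_≤M of H* is finite-dimensional (its dimension is at most the number of admissible cuts of M) and is stable under the top-elimination operator E^top_A for every rooted forest A: E^top_A(H_≤M) ⊆ H_≤M. Hence H_≤M is a finite-dimensional representation of n_T under top elimination T·φ := E^top_T φ. -/

import Mathlib

open scoped Classical

/-- Concrete (labeled) rooted trees: a root with a list of subtrees. -/
inductive RTree : Type
  | node : List RTree → RTree

/-- Shapes of admissible cuts: at each tree, either the full cut
(everything, including the root, goes to the pruned part `P`), or a choice of
an admissible cut of each child subtree.  A `full` occurring strictly inside
corresponds to cutting the edge above that vertex. -/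
inductive CutShape : Type
  | full
  | branch : List CutShape → CutShape

namespace CK

/-- Number of vertices of a forest. -/
def sizeL : List RTree → ℕ
  | [] => 0
  | .node l :: ts => 1 + sizeL l + sizeL ts

/-- All admissible cuts of a forest (a choice of admissible cut of each tree). -/
def cutsF : List RTree → List (List CutShape)
  | [] => [[]]
  | .node l :: ts =>
      (CutShape.full :: (cutsF l).map CutShape.branch).flatMap
        fun c => (cutsF ts).map (c :: ·)

/-- The root part `R_C(F)` of a cut. -/
def Rcut : List RTree → List CutShape → List RTree
  | [], _ => []
  | _ :: _, [] => []
  | .node _ :: ts, .full :: cs => Rcut ts cs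
  | .node l :: ts, .branch ds :: cs => RTree.node (Rcut l ds) :: Rcut ts cs

/-- The pruned part `P_C(F)` of a cut. -/
def Pcut : List RTree → List CutShape → List RTree
  | [], _ => []
  | _ :: _, [] => []
  | .node l :: ts, .full :: cs => RTree.node l :: Pcut ts cs
  | .node l :: ts, .branch ds :: cs => Pcut l ds ++ Pcut ts cs

/-- Number of `full`s occurring in a cut. -/
def fullsL : List CutShape → ℕ
  | [] => 0
  | .full :: cs => 1 + fullsL cs
  | .branch ds :: cs => fullsL ds + fullsL cs

/-- A list of concrete forests containing (representatives of) every forest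
with at most `n` vertices. -/
def forestsUpTo : ℕ → List (List RTree)
  | 0 => [[]]
  | n+1 => [] :: (forestsUpTo n).flatMap fun l => (forestsUpTo n).map fun F => RTree.node l :: F

/-- Isomorphism of rooted trees (non-planar): a root-preserving bijection, i.e.
the lists of subtrees agree up to permutation and isomorphism. -/
inductive Iso : RTree → RTree → Prop
  | node {l₁ l l₂ : List RTree} : List.Forall₂ Iso l₁ l → l.Perm l₂ → Iso (.node l₁) (.node l₂)

/-- Isomorphism classes of rooted trees. -/
abbrev TreeClass : Type := Quot Iso

/-- Isomorphism classes of rooted forests = multisets of tree classes.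
The empty forest is `0`. -/
abbrev ForestClass : Type := Multiset TreeClass

/-- Isomorphism class of a tree. -/
def clT (t : RTree) : TreeClass := Quot.mk _ t

/-- Isomorphism class of a forest. -/
def clF (F : List RTree) : ForestClass := (F.map clT : List TreeClass)

/-- A concrete representative of a forest class. -/
noncomputable def repF (M : ForestClass) : List RTree := M.toList.map Quot.out

/-- A concrete representative of a tree class. -/
noncomputable def repT (T : TreeClass) : RTree := T.out

/-- Number of vertices of a forest class. -/
noncomputable def sizeC (M : ForestClass) : ℕ := sizeL (repF M)

/-- Number of vertices of a tree class. -/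
noncomputable def sizeT (T : TreeClass) : ℕ := sizeL [repT T]

/-- The Hall algebra `H`: finitely supported ℚ-valued functions on
isomorphism classes of rooted forests, with basis the delta functions. -/
abbrev H : Type := ForestClass →₀ ℚ

/-- The basis element `δ_A` of `H`. -/
noncomputable def delta (A : ForestClass) : H := Finsupp.single A 1

/-- `n(A,B;M)`: the number of admissible cuts `C` of `M` with
`P_C(M) ≅ A` and `R_C(M) ≅ B`. -/
noncomputable def nCuts (A B M : ForestClass) : ℕ :=
  (cutsF (repF M)).countP fun c =>
    decide (clF (Pcut (repF M) c) = A ∧ clF (Rcut (repF M) c) = B)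

/-- A finite set of forest classes containing all classes with at most `n`
vertices. -/
noncomputable def forestCand (n : ℕ) : Finset ForestClass :=
  ((forestsUpTo n).map clF).toFinset

/-- A finite set of tree classes containing all classes with at most `n+1`
vertices. -/
noncomputable def treeCand (n : ℕ) : Finset TreeClass :=
  ((forestsUpTo n).map fun F => clT (RTree.node F)).toFinset

/-- The Hall product on basis elements: `δ_A × δ_B = Σ_M n(A,B;M)·δ_M`
(every `M` with `n(A,B;M) ≠ 0` has exactly `sizeC A + sizeC B` vertices). -/
noncomputable def mulBasis (A B : ForestClass) : H :=
  ∑ M ∈ forestCand (sizeC A + sizeC B), (nCuts A B M : ℚ) • delta M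

/-- The Hall product on `H`, extended bilinearly from basis elements. -/
noncomputable def hmul (f g : H) : H :=
  f.sum fun A a => g.sum fun B b => (a * b) • mulBasis A B

/-- The Connes-Kreimer Lie algebra `n_T` (as a vector space): the span of
isomorphism classes of rooted trees. -/
abbrev nT : Type := TreeClass →₀ ℚ

/-- The basis element of `n_T` corresponding to a rooted tree `T`. -/
noncomputable def tau (T : TreeClass) : nT := Finsupp.single T 1

/-- `a(T₁,T₂;T)`: the number of edges `e` of `T` such that the single-edge cut
at `e` has pruned part `≅ T₁` and root part `≅ T₂`. -/
noncomputable def aCount (T₁ T₂ T : TreeClass) : ℕ :=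
  (cutsF [repT T]).countP fun c =>
    decide (fullsL c = 1 ∧ clF (Pcut [repT T] c) = ({T₁} : Multiset TreeClass)
      ∧ clF (Rcut [repT T] c) = ({T₂} : Multiset TreeClass))

/-- The grafting (pre-Lie) product on basis elements:
`T₁ * T₂ = Σ_T a(T₁,T₂;T)·T`. -/
noncomputable def graftBasis (T₁ T₂ : TreeClass) : nT :=
  ∑ T ∈ treeCand (sizeT T₁ + sizeT T₂), (aCount T₁ T₂ T : ℚ) • tau T

/-- The grafting (pre-Lie) product on `n_T`, extended bilinearly. -/
noncomputable def graft (x y : nT) : nT :=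
  x.sum fun T₁ a => y.sum fun T₂ b => (a * b) • graftBasis T₁ T₂

/-- The Connes-Kreimer bracket `[x,y] = x*y - y*x` on `n_T`. -/
noncomputable def ckBracket (x y : nT) : nT := graft x y - graft y x

/-- `Ẽ_A δ_B = Σ_C δ_{R_C(B)}`, the sum over admissible cuts `C` of `B` with
`P_C(B) ≅ A`. -/
noncomputable def elimBasis (A B : ForestClass) : H :=
  (((cutsF (repF B)).filter fun c => decide (clF (Pcut (repF B) c) = A)).map
    fun c => delta (clF (Rcut (repF B) c))).sum

/-- The elimination operator `E_A` (here on `H ≅ H*`, identifying `φ_B` with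
`δ_B`). -/
noncomputable def elim (A : ForestClass) : H →ₗ[ℚ] H :=
  Finsupp.lsum ℚ fun B => LinearMap.toSpanSingleton ℚ H (elimBasis A B)

/-- `Ẽ^top_A δ_B = Σ_C δ_{P_C(B)}`, the sum over admissible cuts `C` of `B`
with `R_C(B) ≅ A`. -/
noncomputable def topElimBasis (A B : ForestClass) : H :=
  (((cutsF (repF B)).filter fun c => decide (clF (Rcut (repF B) c) = A)).map
    fun c => delta (clF (Pcut (repF B) c))).sum

/-- The top-elimination operator `E^top_A`. -/
noncomputable def topElim (A : ForestClass) : H →ₗ[ℚ] H :=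
  Finsupp.lsum ℚ fun B => LinearMap.toSpanSingleton ℚ H (topElimBasis A B)

/-- `H ⊗ H`, realized as finitely supported functions on pairs of classes. -/
abbrev H2 : Type := (ForestClass × ForestClass) →₀ ℚ

/-- `Δ(δ_M) = Σ δ_A ⊗ δ_B`, the sum over ordered pairs `(A,B)` of classes with
`A ⊔ B ≅ M`. -/
noncomputable def deltaBasis (M : ForestClass) : H2 :=
  ∑ A ∈ M.powerset.toFinset, Finsupp.single (A, M - A) 1

/-- The coproduct `Δ : H → H ⊗ H`. -/
noncomputable def coprod : H →ₗ[ℚ] H2 :=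
  Finsupp.lsum ℚ fun M => LinearMap.toSpanSingleton ℚ H2 (deltaBasis M)

/-- `H_≤M`: the subspace of `H* ≅ H` spanned by
`{φ_{P_C(M)} : C an admissible cut of M}` (the subobjects of `M`). -/
noncomputable def Hle (M : ForestClass) : Submodule ℚ H :=
  Submodule.span ℚ
    {v : H | ∃ c ∈ cutsF (repF M), v = delta (clF (Pcut (repF M) c))}

/-! Let `𝒫(F)` be the set of classes `[P_C(F)]` of pruned parts of a forest `F`. It is additive
over disjoint union (pointwise sum of sets) and `𝒫(•l) = {•l} ∪ 𝒫(l)` for a tree with children `l`,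
so `𝒫(F)` depends only on the class of `F`. A cut of a pruned part `P_C(F)` is the restriction of a
cut of `F`, so `𝒫(P_C(F)) ⊆ 𝒫(F)`. Hence `E^top_A` sends each generator `δ_N`, `N ∈ 𝒫(M)`, of
`H_≤M` into the span of the `δ_N'` with `N' ∈ 𝒫(N) ⊆ 𝒫(M)`. -/

open scoped Pointwise

theorem sum_map_eq_of_perm_map {α β M : Type*} [AddCommMonoid M] {f : α → M} {g : α → β} :
    ∀ {l l' : List α}, (∀ a ∈ l, ∀ b ∈ l', g a = g b → f a = f b) →
      (l.map g).Perm (l'.map g) → (l.map f).sum = (l'.map f).sum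
  | [], l', _, h => by rw [List.map_eq_nil_iff.mp (List.Perm.nil_eq h).symm]
  | a :: l, l', hf, h => by
    classical
    obtain ⟨b, hb, hba⟩ := List.mem_map.mp (h.subset (List.mem_map_of_mem List.mem_cons_self))
    have hl' := List.perm_cons_erase hb
    have hrest : (l.map g).Perm ((l'.erase b).map g) := by
      have := h.trans (hl'.map g)
      rw [List.map_cons, List.map_cons, hba] at this
      exact this.cons_inv
    rw [(hl'.map f).sum_eq, List.map_cons, List.map_cons, List.sum_cons, List.sum_cons,
      hf a List.mem_cons_self b hb hba.symm,
      sum_map_eq_of_perm_map (fun x hx y hy => hf x (List.mem_cons_of_mem _ hx) y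
        (List.mem_of_mem_erase hy)) hrest]

theorem setOf_exists_mem_eq_toFinset {α V : Type*} [DecidableEq V] (L : List α) (f : α → V) :
    {v | ∃ a ∈ L, v = f a} = ((L.map f).toFinset : Set V) := by
  ext v
  simp [eq_comm]

theorem mem_cutsF_nil {c : List CutShape} : c ∈ cutsF [] ↔ c = [] := by
  simp [cutsF]

theorem mem_cutsF_cons {l ts : List RTree} {c : List CutShape} :
    c ∈ cutsF (RTree.node l :: ts) ↔
      ∃ c₀ cs, c = c₀ :: cs ∧
        (c₀ = CutShape.full ∨ ∃ ds ∈ cutsF l, c₀ = CutShape.branch ds) ∧ cs ∈ cutsF ts := by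
  simp only [cutsF, List.mem_flatMap, List.mem_cons, List.mem_map]
  constructor
  · rintro ⟨c₀, hc₀, cs, hcs, rfl⟩
    exact ⟨c₀, cs, rfl, hc₀.imp_right fun ⟨ds, hds, h⟩ => ⟨ds, hds, h.symm⟩, hcs⟩
  · rintro ⟨c₀, cs, rfl, hc₀, hcs⟩
    exact ⟨c₀, hc₀.imp_right fun ⟨ds, hds, h⟩ => ⟨ds, hds, h.symm⟩, cs, hcs, rfl⟩

def prunedClasses (F : List RTree) : Set ForestClass :=
  {N | ∃ c ∈ cutsF F, clF (Pcut F c) = N}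

def treePrunedClasses : RTree → Set ForestClass
  | .node l => insert {clT (.node l)} (prunedClasses l)

theorem prunedClasses_nil : prunedClasses [] = {0} := by
  ext N
  simp [prunedClasses, mem_cutsF_nil, Pcut, clF, eq_comm]

theorem prunedClasses_cons (t : RTree) (ts : List RTree) :
    prunedClasses (t :: ts) = treePrunedClasses t + prunedClasses ts := by
  obtain ⟨l⟩ := t
  ext N
  simp only [prunedClasses, treePrunedClasses, mem_cutsF_cons, Set.mem_add, Set.mem_insert_iff,
    Set.mem_ofPred_eq]
  constructor
  · rintro ⟨_, ⟨c₀, cs, rfl, hc₀ | ⟨ds, hds, rfl⟩, hcs⟩, rfl⟩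
    · subst hc₀
      exact ⟨_, Or.inl rfl, _, ⟨cs, hcs, rfl⟩, by simp [Pcut, clF]⟩
    · exact ⟨_, Or.inr ⟨ds, hds, rfl⟩, _, ⟨cs, hcs, rfl⟩, by simp [Pcut, clF]⟩
  · rintro ⟨_, rfl | ⟨ds, hds, rfl⟩, _, ⟨cs, hcs, rfl⟩, rfl⟩
    · exact ⟨_, ⟨_, cs, rfl, Or.inl rfl, hcs⟩, by simp [Pcut, clF]⟩
    · exact ⟨_, ⟨_, cs, rfl, Or.inr ⟨ds, hds, rfl⟩, hcs⟩, by simp [Pcut, clF]⟩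

theorem prunedClasses_eq_sum (F : List RTree) :
    prunedClasses F = (F.map treePrunedClasses).sum := by
  induction F with
  | nil => exact prunedClasses_nil
  | cons t ts ih => rw [prunedClasses_cons, ih, List.map_cons, List.sum_cons]

theorem prunedClasses_append (F G : List RTree) :
    prunedClasses (F ++ G) = prunedClasses F + prunedClasses G := by
  simp only [prunedClasses_eq_sum, List.map_append, List.sum_append]

theorem prunedClasses_Pcut_subset :
    ∀ {F : List RTree} {c : List CutShape}, c ∈ cutsF F →
      prunedClasses (Pcut F c) ⊆ prunedClasses F
  | [], c, hc => by rw [mem_cutsF_nil.mp hc, Pcut]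
  | .node l :: ts, c, hc => by
    obtain ⟨c₀, cs, rfl, hc₀ | ⟨ds, hds, rfl⟩, hcs⟩ := mem_cutsF_cons.mp hc
    · subst hc₀
      rw [Pcut, prunedClasses_cons, prunedClasses_cons]
      exact Set.add_subset_add_left (prunedClasses_Pcut_subset hcs)
    · rw [Pcut, prunedClasses_append, prunedClasses_cons]
      exact Set.add_subset_add ((prunedClasses_Pcut_subset hds).trans (Set.subset_insert _ _))
        (prunedClasses_Pcut_subset hcs)

def childClasses : RTree → ForestClass
  | .node l => clF l

theorem map_clT_eq_of_forall₂_iso {l₁ l₂ : List RTree} (h : List.Forall₂ Iso l₁ l₂) :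
    l₁.map clT = l₂.map clT := by
  induction h with
  | nil => rfl
  | cons hab _ ih => rw [List.map_cons, List.map_cons, ih, clT, clT, Quot.sound hab]

theorem childClasses_eq_of_iso {t u : RTree} (h : Iso t u) : childClasses t = childClasses u := by
  obtain ⟨h₁, h₂⟩ := h
  exact (congrArg _ (map_clT_eq_of_forall₂_iso h₁)).trans (Multiset.coe_eq_coe.mpr (h₂.map clT))

theorem clF_eq_of_clT_node_eq {l l' : List RTree} (h : clT (.node l) = clT (.node l')) :
    clF l = clF l' :=
  congrArg (Quot.lift childClasses fun _ _ => childClasses_eq_of_iso) h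

theorem treePrunedClasses_congr : ∀ {t u : RTree}, clT t = clT u →
    treePrunedClasses t = treePrunedClasses u
  | .node l, .node l', h => by
    rw [treePrunedClasses, treePrunedClasses, h, prunedClasses_eq_sum, prunedClasses_eq_sum,
      sum_map_eq_of_perm_map (fun a _ b _ hab => treePrunedClasses_congr hab)
        (Multiset.coe_eq_coe.mp (clF_eq_of_clT_node_eq h))]

theorem prunedClasses_congr {F G : List RTree} (h : clF F = clF G) :
    prunedClasses F = prunedClasses G := by
  rw [prunedClasses_eq_sum, prunedClasses_eq_sum]
  exact sum_map_eq_of_perm_map (fun _ _ _ _ => treePrunedClasses_congr)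
    (Multiset.coe_eq_coe.mp h)

theorem clF_repF (N : ForestClass) : clF (repF N) = N := by
  simp only [clF, repF, List.map_map]
  rw [show clT ∘ (Quot.out : TreeClass → RTree) = id from funext Quot.out_eq]
  simp

theorem prunedClasses_repF_subset {F : List RTree} {N : ForestClass} (hN : N ∈ prunedClasses F) :
    prunedClasses (repF N) ⊆ prunedClasses F := by
  obtain ⟨c, hc, rfl⟩ := hN
  rw [prunedClasses_congr (clF_repF _)]
  exact prunedClasses_Pcut_subset hc

theorem Hle_eq_span_prunedClasses (M : ForestClass) :
    Hle M = Submodule.span ℚ (delta '' prunedClasses (repF M)) := by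
  rw [Hle]
  congr 1
  ext v
  simp [prunedClasses, eq_comm]

theorem topElim_delta_mem_span (A N : ForestClass) :
    topElim A (delta N) ∈ Submodule.span ℚ (delta '' prunedClasses (repF N)) := by
  rw [show topElim A (delta N) = topElimBasis A N by simp [topElim, delta], topElimBasis]
  refine list_sum_mem fun x hx => ?_
  obtain ⟨c, hc, rfl⟩ := List.mem_map.mp hx
  exact Submodule.subset_span ⟨_, ⟨c, (List.mem_filter.mp hc).1, rfl⟩, rfl⟩

/-- STATEMENT 16: for every rooted forest `M`, the subspace `H_≤M` is
finite-dimensional of dimension at most the number of admissible cuts of `M`,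
and is stable under every top-elimination operator `E^top_A`.  Hence it is a
finite-dimensional representation of `n_T` under top elimination. -/
theorem Hle_findim_stable (M : ForestClass) :
    FiniteDimensional ℚ (Hle M) ∧
    Module.finrank ℚ (Hle M) ≤ (cutsF (repF M)).length ∧
    ∀ A : ForestClass, ∀ w ∈ Hle M, topElim A w ∈ Hle M := by
  have hfin : Hle M = Submodule.span ℚ
      ↑(((cutsF (repF M)).map fun c => delta (clF (Pcut (repF M) c))).toFinset) := by
    rw [Hle, setOf_exists_mem_eq_toFinset]
  refine ⟨hfin ▸ inferInstance, ?_, fun A => ?_⟩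
  · rw [hfin]
    exact (finrank_span_finset_le_card _).trans
      ((List.toFinset_card_le _).trans (List.length_map _).le)
  · suffices Hle M ≤ (Hle M).comap (topElim A) from this
    rw [Hle_eq_span_prunedClasses, Submodule.span_le]
    rintro _ ⟨N, hN, rfl⟩
    exact Submodule.span_mono (Set.image_mono (prunedClasses_repF_subset hN))
      (topElim_delta_mem_span A N)

end CK
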